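/- Theorem (Zhu's generalized Jacobi-Stirling triangle of the second kind). Let a₁, a₂, a₃, b₁, b₂, b₃ be real numbers such that for every k ∈ ℕ one has a₁k² + a₂k + a₃ ≥ 0 and b₁k² + b₂k + b₃ ≥ 0. Define J : ℕ → ℕ → ℝ by J 0 0 = 1, J n k = 0 unless 0 ≤ k ≤ n, and for n ≥ 1 and 0 ≤ k ≤ n, J n k = (a₁k² + a₂k + a₃) · J (n−1) k + (b₁k² + b₂k + b₃) · J (n−1) (k−1), where the term with index k−1 is 0 when k = 0. Then the matrix [J n k]_{n,k≥0} is totally positive. -/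

import Mathlib

open Finset

/-- An `ℕ × ℕ` matrix of real numbers is *totally positive* if every minor
taken along strictly increasing row and column indices is nonnegative. -/
def TPReal (A : ℕ → ℕ → ℝ) : Prop :=
  ∀ r : ℕ, 1 ≤ r → ∀ ρ κ : Fin r → ℕ, StrictMono ρ → StrictMono κ →
    0 ≤ (Matrix.of fun i j : Fin r => A (ρ i) (κ j)).det

/-- The Toeplitz matrix of a sequence: `𝒯(c) i j = c (i - j)` for `i ≥ j`
and `0` otherwise. -/
def toeplitz (c : ℕ → ℝ) : ℕ → ℕ → ℝ :=
  fun i j => if j ≤ i then c (i - j) else 0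

/-- Zhu's generalized Jacobi-Stirling triangle of the second kind, with
row-independent weights `f k` and `g k`: `J 0 0 = 1`, `J n k = 0` unless
`0 ≤ k ≤ n`, and for `n ≥ 1` and `0 ≤ k ≤ n`,
`J n k = f k · J (n-1) k + g k · J (n-1) (k-1)`, where the `k-1` term
vanishes when `k = 0`. -/
noncomputable def zhuJ (f g : ℕ → ℝ) : ℕ → ℕ → ℝ
  | 0, 0 => 1
  | 0, _ + 1 => 0
  | n + 1, 0 => f 0 * zhuJ f g n 0
  | n + 1, k + 1 =>
      if k + 1 ≤ n + 1 then
        f (k + 1) * zhuJ f g n (k + 1) + g (k + 1) * zhuJ f g n k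
      else 0

/-!
Peeling off the first step of the recurrence gives the factorization
`J = L · (1 ⊕ g 1 · J')`, where `L` is the lower-triangular Toeplitz matrix of `(f 0 ^ n)` and
`J'` is the triangle with shifted weights `f (· + 1)`, `g (· + 1)`. Multiplying by `L` amounts to
Whitney's row operations "add `f 0` times row `c` to row `c + 1`" for `c = 0, 1, …`, and these,
like `A ↦ 1 ⊕ A`, preserve nonnegativity of minors. Inducting on the largest row index of a
minor shows that every minor of `J` is nonnegative.
-/

lemma StrictMono.update_of_eq_succ {r : ℕ} {ρ : Fin r → ℕ} (hρ : StrictMono ρ) {a₀ : Fin r}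
    {i : ℕ} (ha₀ : ρ a₀ = i + 1) (hi : ∀ a, ρ a ≠ i) : StrictMono (Function.update ρ a₀ i) := by
  intro a b hab
  have hρab := hρ hab
  have := hi a
  have := hi b
  simp only [Function.update_apply]
  split_ifs with ha hb hb
  · exact absurd (ha ▸ hb ▸ hab) (lt_irrefl _)
  · have := hρ (ha ▸ hab); omega
  · have := hρ (hb ▸ hab); omega
  · exact hρab

lemma StrictMono.exists_eq_succ {r : ℕ} {ρ : Fin r → ℕ} (hρ : StrictMono ρ)
    (h : ∀ a, ρ a ≠ 0) : ∃ ρ' : Fin r → ℕ, StrictMono ρ' ∧ ρ = fun a => ρ' a + 1 := by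
  refine ⟨fun a => ρ a - 1, fun a b hab => ?_, funext fun a => ?_⟩
  · have := hρ hab; have := h a; show ρ a - 1 < ρ b - 1; omega
  · exact (Nat.sub_add_cancel (Nat.one_le_iff_ne_zero.mpr (h a))).symm

lemma StrictMono.apply_ne_zero {r : ℕ} {ρ : Fin (r + 1) → ℕ} (hρ : StrictMono ρ)
    {a : Fin (r + 1)} (ha : a ≠ 0) : ρ a ≠ 0 :=
  Nat.ne_zero_of_lt (hρ (Fin.pos_iff_ne_zero.mpr ha))

def TPRealBelow (B : ℕ) (A : ℕ → ℕ → ℝ) : Prop :=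
  ∀ r : ℕ, ∀ ρ κ : Fin r → ℕ, StrictMono ρ → StrictMono κ → (∀ i, ρ i < B) →
    0 ≤ (Matrix.of fun i j : Fin r => A (ρ i) (κ j)).det

lemma TPReal.of_forall_tpRealBelow {A : ℕ → ℕ → ℝ} (h : ∀ B, TPRealBelow B A) :
    TPReal A := by
  rintro (_ | r) - ρ κ hρ hκ
  · simp
  · exact h (ρ (Fin.last r) + 1) _ ρ κ hρ hκ fun i =>
      Nat.lt_succ_of_le (hρ.monotone (Fin.le_last i))

namespace TPRealBelow

open Function

lemma zero (A : ℕ → ℕ → ℝ) : TPRealBelow 0 A := by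
  rintro (_ | r) ρ κ - - hB
  · simp
  · exact absurd (hB 0) (Nat.not_lt_zero _)

lemma smul {B : ℕ} {A : ℕ → ℕ → ℝ} (h : TPRealBelow B A) {c : ℝ} (hc : 0 ≤ c) :
    TPRealBelow B (c • A) := by
  intro r ρ κ hρ hκ hB
  have : (Matrix.of fun i j : Fin r => (c • A) (ρ i) (κ j)) =
      c • Matrix.of fun i j : Fin r => A (ρ i) (κ j) := by
    ext; simp
  rw [this, Matrix.det_smul]
  exact mul_nonneg (pow_nonneg hc _) (h r ρ κ hρ hκ hB)

lemma update_succ {B : ℕ} {Y : ℕ → ℕ → ℝ} (h : TPRealBelow B Y) {t : ℝ} (ht : 0 ≤ t)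
    (i : ℕ) : TPRealBelow B (update Y (i + 1) (Y (i + 1) + t • Y i)) := by
  intro r ρ κ hρ hκ hB
  set M : Matrix (Fin r) (Fin r) ℝ := Matrix.of fun a b => Y (ρ a) (κ b)
  by_cases hrow : ∃ a₀, ρ a₀ = i + 1
  swap
  · push Not at hrow
    simpa [update_apply, hrow] using h r ρ κ hρ hκ hB
  obtain ⟨a₀, ha₀⟩ := hrow
  have hsplit : (Matrix.of fun a b => update Y (i + 1) (Y (i + 1) + t • Y i) (ρ a) (κ b)) =
      M.updateRow a₀ (M a₀ + t • fun b => Y i (κ b)) := by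
    ext a b
    rcases eq_or_ne a a₀ with rfl | ha
    · simp [M, ha₀]
    · simp [M, ha, update_apply, ← ha₀, hρ.injective.ne ha]
  rw [hsplit, Matrix.det_updateRow_add, Matrix.updateRow_eq_self, Matrix.det_updateRow_smul]
  refine add_nonneg (h r ρ κ hρ hκ hB) (mul_nonneg ht ?_)
  -- Row `a₀` now reads row `i` of `Y`: either that row is already in the minor, or the result
  -- is the minor with row index `i + 1` lowered to `i`.
  by_cases hi : ∃ a₁, ρ a₁ = i
  · obtain ⟨a₁, ha₁⟩ := hi
    have hne : a₀ ≠ a₁ := by rintro rfl; omega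
    refine (Matrix.det_zero_of_row_eq hne ?_).ge
    ext b
    simp [M, hne.symm, ha₁]
  · push Not at hi
    have hupd : M.updateRow a₀ (fun b => Y i (κ b)) =
        Matrix.of fun a b => Y (update ρ a₀ i a) (κ b) := by
      ext a b
      rcases eq_or_ne a a₀ with rfl | ha
      · simp [M]
      · simp [M, ha]
    rw [hupd]
    refine h r _ κ (hρ.update_of_eq_succ ha₀ hi) hκ fun a => ?_
    rcases eq_or_ne a a₀ with rfl | ha
    · have := hB a; rw [update_self]; omega
    · simpa [ha] using hB a

lemma of_succ_eq_smul_add {B : ℕ} {t : ℝ} (ht : 0 ≤ t) {X D : ℕ → ℕ → ℝ}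
    (hD : TPRealBelow B D) (h₀ : X 0 = D 0) (hsucc : ∀ n, X (n + 1) = t • X n + D (n + 1)) :
    TPRealBelow B X := by
  -- `H c` has the rows of `X` up to `c` and those of `D` below; one row operation turns
  -- `H c` into `H (c + 1)`.
  let H (c : ℕ) : ℕ → ℕ → ℝ := fun n => if n ≤ c then X n else D n
  have hH : ∀ c, TPRealBelow B (H c) := by
    intro c
    induction c with
    | zero =>
      convert hD using 1
      ext n : 1
      rcases n with _ | n <;> simp [H, h₀]
    | succ c ih =>
      convert ih.update_succ ht c using 1
      ext n : 1
      rcases eq_or_ne n (c + 1) with rfl | hn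
      · simp [H, hsucc, add_comm]
      · simp only [H, update_of_ne hn]
        congr 1
        exact propext (by omega)
  intro r ρ κ hρ hκ hρB
  convert hH B r ρ κ hρ hκ hρB using 2
  ext a b
  simp [H, (hρB a).le]

end TPRealBelow

def oneDirectSum (A : ℕ → ℕ → ℝ) : ℕ → ℕ → ℝ
  | 0, 0 => 1
  | 0, _ + 1 => 0
  | _ + 1, 0 => 0
  | n + 1, k + 1 => A n k

@[simp] lemma oneDirectSum_zero_zero (A : ℕ → ℕ → ℝ) : oneDirectSum A 0 0 = 1 := rfl

lemma oneDirectSum_zero_of_ne_zero (A : ℕ → ℕ → ℝ) {k : ℕ} (hk : k ≠ 0) :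
    oneDirectSum A 0 k = 0 := by
  obtain ⟨k, rfl⟩ := Nat.exists_eq_add_one_of_ne_zero hk; rfl

lemma oneDirectSum_of_ne_zero_zero (A : ℕ → ℕ → ℝ) {n : ℕ} (hn : n ≠ 0) :
    oneDirectSum A n 0 = 0 := by
  obtain ⟨n, rfl⟩ := Nat.exists_eq_add_one_of_ne_zero hn; rfl

lemma tpRealBelow_succ_oneDirectSum {B : ℕ} {A : ℕ → ℕ → ℝ} (h : TPRealBelow B A) :
    TPRealBelow (B + 1) (oneDirectSum A) := by
  have hshift : ∀ r (ρ κ : Fin r → ℕ), StrictMono ρ → StrictMono κ → (∀ a, ρ a < B + 1) →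
      (∀ a, ρ a ≠ 0) → (∀ b, κ b ≠ 0) →
      0 ≤ (Matrix.of fun a b => oneDirectSum A (ρ a) (κ b)).det := by
    intro r ρ κ hρ hκ hB hρ0 hκ0
    obtain ⟨ρ, hρ', rfl⟩ := hρ.exists_eq_succ hρ0
    obtain ⟨κ, hκ', rfl⟩ := hκ.exists_eq_succ hκ0
    exact h r ρ κ hρ' hκ' fun a => Nat.succ_lt_succ_iff.mp (hB a)
  rintro (_ | r) ρ κ hρ hκ hB
  · simp
  by_cases hρ0 : ρ 0 = 0 <;> by_cases hκ0 : κ 0 = 0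
  · rw [Matrix.det_succ_row_zero, Fin.sum_univ_succ, Finset.sum_eq_zero fun j _ => ?_]
    · simp only [Fin.coe_ofNat_eq_mod, Nat.zero_mod, pow_zero, Matrix.of_apply, hρ0, hκ0,
        oneDirectSum_zero_zero, mul_one, one_mul, add_zero]
      exact hshift r (fun a => ρ a.succ) (fun b => κ b.succ) (hρ.comp Fin.strictMono_succ)
        (hκ.comp Fin.strictMono_succ) (fun a => hB a.succ)
        (fun a => hρ.apply_ne_zero (Fin.succ_ne_zero a))
        (fun b => hκ.apply_ne_zero (Fin.succ_ne_zero b))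
    · simp [hρ0, oneDirectSum_zero_of_ne_zero A (hκ.apply_ne_zero (Fin.succ_ne_zero j))]
  · refine (Matrix.det_eq_zero_of_row_eq_zero 0 fun j => ?_).ge
    rcases eq_or_ne j 0 with rfl | hj
    · simp [hρ0, oneDirectSum_zero_of_ne_zero A hκ0]
    · simp [hρ0, oneDirectSum_zero_of_ne_zero A (hκ.apply_ne_zero hj)]
  · refine (Matrix.det_eq_zero_of_column_eq_zero 0 fun a => ?_).ge
    rcases eq_or_ne a 0 with rfl | ha
    · simp [hκ0, oneDirectSum_of_ne_zero_zero A hρ0]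
    · simp [hκ0, oneDirectSum_of_ne_zero_zero A (hρ.apply_ne_zero ha)]
  · refine hshift _ ρ κ hρ hκ hB (fun a => ?_) (fun b => ?_)
    · rcases eq_or_ne a 0 with rfl | ha
      exacts [hρ0, hρ.apply_ne_zero ha]
    · rcases eq_or_ne b 0 with rfl | hb
      exacts [hκ0, hκ.apply_ne_zero hb]

namespace zhuJ

variable (f g : ℕ → ℝ)

@[simp] lemma zero_zero : zhuJ f g 0 0 = 1 := rfl

@[simp] lemma zero_succ (k : ℕ) : zhuJ f g 0 (k + 1) = 0 := rfl

@[simp] lemma succ_zero (n : ℕ) : zhuJ f g (n + 1) 0 = f 0 * zhuJ f g n 0 := rfl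

lemma eq_zero_of_lt {n k : ℕ} (h : n < k) : zhuJ f g n k = 0 := by
  obtain ⟨k, rfl⟩ := Nat.exists_eq_add_one_of_ne_zero (Nat.ne_zero_of_lt h)
  cases n with
  | zero => rfl
  | succ n => rw [zhuJ, if_neg (by omega)]

lemma succ_succ (n k : ℕ) :
    zhuJ f g (n + 1) (k + 1) = f (k + 1) * zhuJ f g n (k + 1) + g (k + 1) * zhuJ f g n k := by
  by_cases h : k ≤ n
  · rw [zhuJ, if_pos (by omega)]
  · simp [eq_zero_of_lt f g (show n + 1 < k + 1 by omega),
      eq_zero_of_lt f g (show n < k + 1 by omega), eq_zero_of_lt f g (show n < k by omega)]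

lemma succ_succ_eq_first_step (n k : ℕ) :
    zhuJ f g (n + 1) (k + 1) =
      f 0 * zhuJ f g n (k + 1) + g 1 * zhuJ (fun j => f (j + 1)) (fun j => g (j + 1)) n k := by
  induction n generalizing k with
  | zero => cases k <;> simp [succ_succ]
  | succ n ih =>
    conv_rhs => rw [succ_succ f g n k]
    rw [succ_succ f g (n + 1) k, ih k]
    cases k with
    | zero => rw [succ_zero, succ_zero]; ring
    | succ k => rw [ih k, succ_succ _ _ n k]; ring

lemma zero_eq_oneDirectSum :
    zhuJ f g 0 = oneDirectSum (g 1 • zhuJ (fun j => f (j + 1)) (fun j => g (j + 1))) 0 := by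
  ext (_ | k) <;> rfl

lemma succ_eq_smul_add_oneDirectSum (n : ℕ) :
    zhuJ f g (n + 1) = f 0 • zhuJ f g n +
      oneDirectSum (g 1 • zhuJ (fun j => f (j + 1)) (fun j => g (j + 1))) (n + 1) := by
  ext (_ | k)
  · simp [oneDirectSum_of_ne_zero_zero]
  · simp [succ_succ_eq_first_step, oneDirectSum]

end zhuJ

theorem tpRealBelow_zhuJ (B : ℕ) {f g : ℕ → ℝ} (hf : ∀ k, 0 ≤ f k) (hg : ∀ k, 0 ≤ g k) :
    TPRealBelow B (zhuJ f g) := by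
  induction B generalizing f g with
  | zero => exact TPRealBelow.zero _
  | succ B ih =>
    have hJ' := ih (fun k => hf (k + 1)) (fun k => hg (k + 1))
    exact (tpRealBelow_succ_oneDirectSum (hJ'.smul (hg 1))).of_succ_eq_smul_add (hf 0)
      (zhuJ.zero_eq_oneDirectSum f g) (zhuJ.succ_eq_smul_add_oneDirectSum f g)

theorem tpReal_zhuJ {f g : ℕ → ℝ} (hf : ∀ k, 0 ≤ f k) (hg : ∀ k, 0 ≤ g k) :
    TPReal (zhuJ f g) :=
  TPReal.of_forall_tpRealBelow fun B => tpRealBelow_zhuJ B hf hg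

/-- **Theorem (Zhu's generalized Jacobi-Stirling triangle of the second
kind).**  Let `a₁, a₂, a₃, b₁, b₂, b₃` be real numbers such that
`a₁k² + a₂k + a₃ ≥ 0` and `b₁k² + b₂k + b₃ ≥ 0` for every `k ∈ ℕ`.  Then the
triangle `J` defined by `J 0 0 = 1`, `J n k = 0` unless `0 ≤ k ≤ n`, and
`J n k = (a₁k² + a₂k + a₃)·J (n-1) k + (b₁k² + b₂k + b₃)·J (n-1) (k-1)` is
totally positive. -/
theorem zhuJ_totallyPositive (a₁ a₂ a₃ b₁ b₂ b₃ : ℝ)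
    (ha : ∀ k : ℕ, 0 ≤ a₁ * (k : ℝ) ^ 2 + a₂ * k + a₃)
    (hb : ∀ k : ℕ, 0 ≤ b₁ * (k : ℝ) ^ 2 + b₂ * k + b₃) :
    TPReal (zhuJ (fun k => a₁ * (k : ℝ) ^ 2 + a₂ * k + a₃)
        (fun k => b₁ * (k : ℝ) ^ 2 + b₂ * k + b₃)) :=
  tpReal_zhuJ ha hb
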